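/- For each residue m ∈ Z/rZ there exists a simple H'-module W on which x^r and y^r act as zero and such that s v = ε^m v for every v ∈ W with y v = 0; moreover W is unique up to isomorphism, and its dimension D satisfies 1 ≤ D ≤ r and is the smallest positive integer such that 0 = Σ_{i=0}^{D−1} Σ_{j=1}^{r−1} c_j ε^{(m−i)j} in k. -/

import Mathlib

open scoped BigOperators

noncomputable section

universe u

/-- The defining relations of the rank-1 rational Cherednik algebra `H_t`:
`s ^ r = 1`, `s x = ε⁻¹ x s`, `s y = ε y s`, `y x - x y = t - ∑_{j=1}^{r-1} c_j s^j`. -/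
inductive CherednikRel (k : Type u) [Field k] (r : ℕ) (ε t : k) (c : ℕ → k) :
    FreeAlgebra k (Fin 3) → FreeAlgebra k (Fin 3) → Prop
  | spow : CherednikRel k r ε t c (FreeAlgebra.ι k (2 : Fin 3) ^ r) 1
  | sx : CherednikRel k r ε t c
      (FreeAlgebra.ι k (2 : Fin 3) * FreeAlgebra.ι k (0 : Fin 3))
      (ε⁻¹ • (FreeAlgebra.ι k (0 : Fin 3) * FreeAlgebra.ι k (2 : Fin 3)))
  | sy : CherednikRel k r ε t c
      (FreeAlgebra.ι k (2 : Fin 3) * FreeAlgebra.ι k (1 : Fin 3))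
      (ε • (FreeAlgebra.ι k (1 : Fin 3) * FreeAlgebra.ι k (2 : Fin 3)))
  | yx : CherednikRel k r ε t c
      (FreeAlgebra.ι k (1 : Fin 3) * FreeAlgebra.ι k (0 : Fin 3) -
        FreeAlgebra.ι k (0 : Fin 3) * FreeAlgebra.ι k (1 : Fin 3))
      (algebraMap k (FreeAlgebra k (Fin 3)) t -
        ∑ j ∈ Finset.Icc 1 (r - 1), c j • FreeAlgebra.ι k (2 : Fin 3) ^ j)

/-- The rank-1 rational Cherednik algebra `H_t` over `k`, with parameters
`r`, primitive root `ε`, `t`, and `c`. -/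
abbrev Cherednik (k : Type u) [Field k] (r : ℕ) (ε t : k) (c : ℕ → k) : Type u :=
  RingQuot (CherednikRel k r ε t c)

/-- The generator `x` of `H_t`. -/
def Hx (k : Type u) [Field k] (r : ℕ) (ε t : k) (c : ℕ → k) : Cherednik k r ε t c :=
  RingQuot.mkAlgHom k (CherednikRel k r ε t c) (FreeAlgebra.ι k (0 : Fin 3))

/-- The generator `y` of `H_t`. -/
def Hy (k : Type u) [Field k] (r : ℕ) (ε t : k) (c : ℕ → k) : Cherednik k r ε t c :=
  RingQuot.mkAlgHom k (CherednikRel k r ε t c) (FreeAlgebra.ι k (1 : Fin 3))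

/-- The generator `s` of `H_t`. -/
def Hs (k : Type u) [Field k] (r : ℕ) (ε t : k) (c : ℕ → k) : Cherednik k r ε t c :=
  RingQuot.mkAlgHom k (CherednikRel k r ε t c) (FreeAlgebra.ι k (2 : Fin 3))

/-- The element `h = x y - ∑_{j=1}^{r-1} c_j (1 - ε^{-j})⁻¹ s^j` of `H_t`. -/
def Hh (k : Type u) [Field k] (r : ℕ) (ε t : k) (c : ℕ → k) : Cherednik k r ε t c :=
  Hx k r ε t c * Hy k r ε t c -
    ∑ j ∈ Finset.Icc 1 (r - 1), (c j * (1 - (ε ^ j)⁻¹)⁻¹) • Hs k r ε t c ^ j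


-- ===== relations =====
section Rel
variable (k : Type u) [Field k] (r : ℕ) (ε t : k) (c : ℕ → k)

lemma rel_sr : Hs k r ε t c ^ r = 1 := by
  have := RingQuot.mkAlgHom_rel k (@CherednikRel.spow k _ r ε t c)
  simpa [Hs, map_pow, map_one] using this

lemma rel_sx : Hs k r ε t c * Hx k r ε t c = ε⁻¹ • (Hx k r ε t c * Hs k r ε t c) := by
  have := RingQuot.mkAlgHom_rel k (@CherednikRel.sx k _ r ε t c)
  simpa [Hs, Hx, map_mul, map_smul] using this

lemma rel_sy : Hs k r ε t c * Hy k r ε t c = ε • (Hy k r ε t c * Hs k r ε t c) := by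
  have := RingQuot.mkAlgHom_rel k (@CherednikRel.sy k _ r ε t c)
  simpa [Hs, Hy, map_mul, map_smul] using this

lemma rel_yx : Hy k r ε 0 c * Hx k r ε 0 c = Hx k r ε 0 c * Hy k r ε 0 c -
    ∑ j ∈ Finset.Icc 1 (r - 1), c j • Hs k r ε 0 c ^ j := by
  have := RingQuot.mkAlgHom_rel k (@CherednikRel.yx k _ r ε 0 c)
  simp only [map_sub, map_mul, map_sum, map_smul, map_pow, map_zero, RingHom.map_zero] at this
  rw [zero_sub] at this
  unfold Hx Hy Hs
  rw [sub_eq_iff_eq_add.mp this]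
  abel

lemma rel_xs (hne : ε ≠ 0) :
    Hx k r ε t c * Hs k r ε t c = ε • (Hs k r ε t c * Hx k r ε t c) := by
  rw [rel_sx, smul_smul, mul_inv_cancel₀ hne, one_smul]

lemma rel_ys (hne : ε ≠ 0) :
    Hy k r ε t c * Hs k r ε t c = ε⁻¹ • (Hs k r ε t c * Hy k r ε t c) := by
  rw [rel_sy, smul_smul, inv_mul_cancel₀ hne, one_smul]

end Rel


section Arith
variable {k : Type u} [Field k] {r : ℕ} {ε : k}

/-- inner sum -/
def ff (r : ℕ) (ε : k) (c : ℕ → k) (m : ZMod r) (i : ℕ) : k :=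
  ∑ j ∈ Finset.Icc 1 (r - 1), c j * ε ^ ((m - (i : ZMod r)).val * j)

def mu (r : ℕ) (ε : k) (c : ℕ → k) (m : ZMod r) (D : ℕ) : k :=
  ∑ i ∈ Finset.range D, ff r ε c m i

def EE (r : ℕ) (ε : k) (a : ZMod r) : k := ε ^ a.val

variable (hr : 1 ≤ r) (hε : IsPrimitiveRoot ε r)
include hr hε
set_option linter.unusedSectionVars false

lemma epow (n : ℕ) : ε ^ n = ε ^ ((n : ZMod r)).val := by
  haveI : NeZero r := ⟨by omega⟩
  conv_lhs => rw [← Nat.div_add_mod n r, pow_add, pow_mul, hε.pow_eq_one, one_pow, one_mul]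
  rw [ZMod.val_natCast]

lemma cast_val (a : ZMod r) : ((a.val : ℕ) : ZMod r) = a := by
  haveI : NeZero r := ⟨by omega⟩
  rw [ZMod.natCast_val, ZMod.cast_id]

lemma EE_add (a b : ZMod r) : EE r ε (a + b) = EE r ε a * EE r ε b := by
  have : a + b = ((a.val + b.val : ℕ) : ZMod r) := by
    rw [Nat.cast_add, cast_val hr hε, cast_val hr hε]
  rw [EE, EE, EE, this, ← epow hr hε, pow_add]

lemma EE_one : EE r ε 1 = ε := by
  rw [show (1 : ZMod r) = ((1:ℕ) : ZMod r) by norm_cast, EE, ← epow hr hε, pow_one]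

lemma EE_sub_succ (a : ZMod r) (n : ℕ) :
    EE r ε (a - ((n : ℕ) + 1 : ℕ)) * ε = EE r ε (a - (n : ℕ)) := by
  have h1 : a - ((n : ℕ) + 1 : ℕ) + 1 = a - (n : ℕ) := by push_cast; ring
  calc EE r ε (a - ((n:ℕ) + 1 : ℕ)) * ε
      = EE r ε (a - ((n:ℕ) + 1 : ℕ)) * EE r ε 1 := by rw [EE_one hr hε]
    _ = EE r ε (a - (n : ℕ)) := by rw [← EE_add hr hε, h1]

omit hr hε in
lemma EE_pow (a : ZMod r) (j : ℕ) : ε ^ (a.val * j) = EE r ε a ^ j := by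
  rw [EE, pow_mul]

lemma EE_ne_zero (a : ZMod r) : EE r ε a ≠ 0 := by
  have hεne : ε ≠ 0 := by
    intro h
    have := hε.pow_eq_one
    rw [h, zero_pow (by omega)] at this
    exact zero_ne_one this
  exact pow_ne_zero _ hεne

lemma eps_ne_zero : ε ≠ 0 := by
  intro h
  have := hε.pow_eq_one
  rw [h, zero_pow (by omega)] at this
  exact zero_ne_one this

lemma EE_inj {a b : ZMod r} (h : EE r ε a = EE r ε b) : a = b := by
  haveI : NeZero r := ⟨by omega⟩
  have := hε.pow_inj (ZMod.val_lt a) (ZMod.val_lt b) h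
  rw [← cast_val hr hε a, ← cast_val hr hε b, this]

lemma EE_pow_r (a : ZMod r) : EE r ε a ^ r = 1 := by
  rw [EE, ← pow_mul, mul_comm, pow_mul, hε.pow_eq_one, one_pow]

omit hr hε in
lemma mu_succ (c : ℕ → k) (m : ZMod r) (n : ℕ) :
    mu r ε c m (n + 1) = mu r ε c m n + ff r ε c m n := Finset.sum_range_succ _ _

omit hr hε in
lemma mu_zero (c : ℕ → k) (m : ZMod r) : mu r ε c m 0 = 0 := Finset.sum_range_zero _

lemma mu_r (c : ℕ → k) (m : ZMod r) : mu r ε c m r = 0 := by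
  haveI : NeZero r := ⟨by omega⟩
  rw [mu]
  unfold ff
  rw [Finset.sum_comm]
  apply Finset.sum_eq_zero
  intro j hj
  rw [Finset.mem_Icc] at hj
  have hj1 : 0 < j := hj.1
  have hj2 : j < r := by omega
  rw [← Finset.mul_sum]
  have hne : ε ^ j ≠ 1 := hε.pow_ne_one_of_pos_of_lt hj1.ne' hj2
  have key : ∑ i ∈ Finset.range r, ε ^ ((m - (i : ZMod r)).val * j) = 0 := by
    have h3 : ∀ i : ℕ, ε ^ ((m - (i : ZMod r)).val * j)
        = (ε ^ j) ^ ((m - (i : ZMod r)).val) := fun i => by rw [mul_comm, pow_mul]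
    simp_rw [h3]
    have hswap : (∑ i ∈ Finset.range r, (ε ^ j) ^ ((m - (i : ZMod r)).val))
        = ∑ v ∈ Finset.range r, (ε ^ j) ^ v := by
      refine Finset.sum_nbij' (fun i => (m - (i : ZMod r)).val)
        (fun v => (m - (v : ZMod r)).val) ?_ ?_ ?_ ?_ ?_
      · intro a _; exact Finset.mem_range.2 (ZMod.val_lt _)
      · intro a _; exact Finset.mem_range.2 (ZMod.val_lt _)
      · intro a ha
        show (m - (((m - (a:ZMod r)).val : ℕ) : ZMod r)).val = a
        rw [cast_val hr hε, sub_sub_cancel, ZMod.val_cast_of_lt (Finset.mem_range.1 ha)]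
      · intro a ha
        show (m - (((m - (a:ZMod r)).val : ℕ) : ZMod r)).val = a
        rw [cast_val hr hε, sub_sub_cancel, ZMod.val_cast_of_lt (Finset.mem_range.1 ha)]
      · intro a _; rfl
    rw [hswap, geom_sum_eq hne r, ← pow_mul, mul_comm j r, pow_mul, hε.pow_eq_one,
      one_pow, sub_self, zero_div]
  rw [key, mul_zero]

end Arith


-- ===== abstract module lemmas =====
section AbsMod
variable {k : Type u} [Field k] {r : ℕ} {ε : k} {c : ℕ → k} {m : ZMod r}
variable (hr : 1 ≤ r) (hε : IsPrimitiveRoot ε r)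
variable {M : Type u} [AddCommGroup M] [Module (Cherednik k r ε 0 c) M] [Module k M]
  [IsScalarTower k (Cherednik k r ε 0 c) M]

set_option linter.unusedSectionVars false

lemma csmul (a : Cherednik k r ε 0 c) (t : k) (w : M) : a • (t • w) = t • (a • w) := by
  rw [← algebraMap_smul (Cherednik k r ε 0 c) t w, ← mul_smul, ← Algebra.commutes, mul_smul,
    algebraMap_smul]

include hr hε

lemma actS (v : M) (hsv : Hs k r ε 0 c • v = EE r ε m • v) (n : ℕ) :
    Hs k r ε 0 c • ((Hx k r ε 0 c) ^ n • v) = EE r ε (m - (n : ℕ)) • ((Hx k r ε 0 c) ^ n • v) := by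
  induction n with
  | zero => simpa using hsv
  | succ n ih =>
    have h1 : (Hx k r ε 0 c) ^ (n+1) • v = Hx k r ε 0 c • ((Hx k r ε 0 c) ^ n • v) := by
      rw [pow_succ', mul_smul]
    rw [h1, ← mul_smul, rel_sx, smul_assoc, mul_smul, ih, csmul, ← h1, smul_smul]
    congr 1
    have h2 := EE_sub_succ hr hε m n
    field_simp [eps_ne_zero hr hε, ← h2]
    linear_combination -h2

lemma actSpow (v : M) (hsv : Hs k r ε 0 c • v = EE r ε m • v) (n j : ℕ) :
    (Hs k r ε 0 c) ^ j • ((Hx k r ε 0 c) ^ n • v)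
      = (EE r ε (m - (n : ℕ))) ^ j • ((Hx k r ε 0 c) ^ n • v) := by
  induction j with
  | zero => simp
  | succ j ih =>
    rw [pow_succ' (Hs k r ε 0 c), mul_smul, ih, csmul, actS hr hε v hsv, smul_smul, ← pow_succ]

lemma actY (v : M) (hyv : Hy k r ε 0 c • v = 0) (hsv : Hs k r ε 0 c • v = EE r ε m • v) (n : ℕ) :
    Hy k r ε 0 c • ((Hx k r ε 0 c) ^ n • v)
      = (-(mu r ε c m n)) • ((Hx k r ε 0 c) ^ (n - 1) • v) := by
  induction n with
  | zero => rw [pow_zero, one_smul, hyv, mu_zero]; simp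
  | succ n ih =>
    have h1 : (Hx k r ε 0 c) ^ (n+1) • v = Hx k r ε 0 c • ((Hx k r ε 0 c) ^ n • v) := by
      rw [pow_succ', mul_smul]
    rw [h1, ← mul_smul, rel_yx, sub_smul, mul_smul, ih, csmul, Finset.sum_smul]
    have h2 : ∀ j ∈ Finset.Icc 1 (r-1), (c j • (Hs k r ε 0 c) ^ j) • ((Hx k r ε 0 c) ^ n • v)
        = (c j * (EE r ε (m - (n:ℕ))) ^ j) • ((Hx k r ε 0 c) ^ n • v) := by
      intro j _
      rw [smul_assoc, actSpow hr hε v hsv, smul_smul]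
    rw [Finset.sum_congr rfl h2, ← Finset.sum_smul]
    have h3 : ∑ j ∈ Finset.Icc 1 (r-1), c j * (EE r ε (m - (n:ℕ))) ^ j = ff r ε c m n := by
      unfold ff
      refine Finset.sum_congr rfl fun j _ => ?_
      rw [EE_pow]
    rw [h3]
    have h4 : (-(mu r ε c m n)) • (Hx k r ε 0 c • ((Hx k r ε 0 c) ^ (n-1) • v))
        = (-(mu r ε c m n)) • ((Hx k r ε 0 c) ^ n • v) := by
      cases n with
      | zero => rw [mu_zero]; simp
      | succ n' =>
        congr 1
        rw [← mul_smul, ← pow_succ']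
        norm_num
    rw [h4, ← sub_smul]
    have h5 : n + 1 - 1 = n := rfl
    rw [h5]
    congr 1
    rw [mu_succ]
    ring

end AbsMod

-- ===== abstract module: x^D kills lowest weight vectors; kernel vectors exist =====
section AbsMod2
variable {k : Type u} [Field k] {r : ℕ} {ε : k} {c : ℕ → k} {m : ZMod r}
variable (hr : 1 ≤ r) (hε : IsPrimitiveRoot ε r)
variable {M : Type u} [AddCommGroup M] [Module (Cherednik k r ε 0 c) M] [Module k M]
  [IsScalarTower k (Cherednik k r ε 0 c) M]

set_option linter.unusedSectionVars false

include hr hε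

lemma xDzero (v : M) (hyv : Hy k r ε 0 c • v = 0) (hsv : Hs k r ε 0 c • v = EE r ε m • v)
    (D : ℕ) (hD0 : 0 < D) (hDr : D ≤ r) (hmuD : mu r ε c m D = 0)
    (hxr : ∀ w : M, (Hx k r ε 0 c) ^ r • w = 0) :
    (∀ w : M, Hy k r ε 0 c • w = 0 → Hs k r ε 0 c • w = EE r ε m • w) →
    (Hx k r ε 0 c) ^ D • v = 0 := by
  intro hcond
  rcases eq_or_lt_of_le hDr with heq | hlt
  · rw [heq]; exact hxr v
  · by_contra hne0
    have hker : Hy k r ε 0 c • ((Hx k r ε 0 c) ^ D • v) = 0 := by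
      rw [actY hr hε v hyv hsv D, hmuD]; simp
    have h1 := hcond _ hker
    have h2 := actS hr hε v hsv D
    rw [h1] at h2
    have h3 : (EE r ε m - EE r ε (m - (D : ℕ))) • ((Hx k r ε 0 c) ^ D • v) = 0 := by
      rw [sub_smul, h2, sub_self]
    rcases smul_eq_zero.mp h3 with h4 | h4
    · have h5 : EE r ε m = EE r ε (m - (D : ℕ)) := sub_eq_zero.mp h4
      have h6 := EE_inj hr hε h5
      have h7 : ((D : ℕ) : ZMod r) = 0 := by linear_combination h6
      have h8 := (ZMod.natCast_eq_zero_iff D r).mp h7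
      have := Nat.le_of_dvd hD0 h8
      omega
    · exact hne0 h4

omit hr hε in
lemma exists_ker (hyr : ∀ w : M, (Hy k r ε 0 c) ^ r • w = 0) (u : M) (hu : u ≠ 0) :
    ∃ v : M, v ≠ 0 ∧ Hy k r ε 0 c • v = 0 := by
  classical
  have hex : ∃ n, (Hy k r ε 0 c) ^ n • u = 0 := ⟨r, hyr u⟩
  have hn0 : Nat.find hex ≠ 0 := by
    intro h
    have := Nat.find_spec hex
    rw [h] at this
    simp at this
    exact hu this
  refine ⟨(Hy k r ε 0 c) ^ (Nat.find hex - 1) • u, Nat.find_min hex (by omega), ?_⟩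
  rw [← mul_smul, ← pow_succ']
  have h1 : Nat.find hex - 1 + 1 = Nat.find hex := by omega
  rw [h1]
  exact Nat.find_spec hex

end AbsMod2

-- ===== the concrete operators =====
section Ops
variable {k : Type u} [Field k]

def extz (D : ℕ) (w : Fin D → k) (n : ℕ) : k := if h : n < D then w ⟨n, h⟩ else 0

lemma extz_lt {D : ℕ} (w : Fin D → k) {n : ℕ} (h : n < D) : extz D w n = w ⟨n, h⟩ := dif_pos h

lemma extz_le {D : ℕ} (w : Fin D → k) {n : ℕ} (h : D ≤ n) : extz D w n = 0 :=
  dif_neg (by omega)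

lemma extz_add {D : ℕ} (a b : Fin D → k) (n : ℕ) :
    extz D (a + b) n = extz D a n + extz D b n := by
  unfold extz; split <;> simp

lemma extz_smul {D : ℕ} (t : k) (a : Fin D → k) (n : ℕ) :
    extz D (t • a) n = t * extz D a n := by
  unfold extz; split <;> simp

variable (r : ℕ) (ε : k) (c : ℕ → k) (m : ZMod r) (D : ℕ)

def Xop : (Fin D → k) →ₗ[k] (Fin D → k) where
  toFun w i := if (i : ℕ) = 0 then 0 else extz D w ((i : ℕ) - 1)
  map_add' a b := by funext i; by_cases h : (i : ℕ) = 0 <;> simp [h, extz_add]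
  map_smul' t a := by funext i; by_cases h : (i : ℕ) = 0 <;> simp [h, extz_smul]

def Yop : (Fin D → k) →ₗ[k] (Fin D → k) where
  toFun w i := (-(mu r ε c m ((i : ℕ) + 1))) * extz D w ((i : ℕ) + 1)
  map_add' a b := by funext i; simp [extz_add]; ring
  map_smul' t a := by funext i; simp [extz_smul]; ring

def Sop : (Fin D → k) →ₗ[k] (Fin D → k) where
  toFun w i := EE r ε (m - ((i : ℕ) : ZMod r)) * w i
  map_add' a b := by funext i; simp; ring
  map_smul' t a := by funext i; simp; ring

lemma Xop_apply (w : Fin D → k) (i : Fin D) :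
    Xop D w i = if (i : ℕ) = 0 then 0 else extz D w ((i : ℕ) - 1) := rfl

lemma Yop_apply (w : Fin D → k) (i : Fin D) :
    Yop r ε c m D w i = (-(mu r ε c m ((i : ℕ) + 1))) * extz D w ((i : ℕ) + 1) := rfl

lemma Sop_apply (w : Fin D → k) (i : Fin D) :
    Sop r ε m D w i = EE r ε (m - ((i : ℕ) : ZMod r)) * w i := rfl

lemma Sop_pow_apply (j : ℕ) (w : Fin D → k) (i : Fin D) :
    ((Sop r ε m D) ^ j) w i = (EE r ε (m - ((i : ℕ) : ZMod r))) ^ j * w i := by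
  induction j with
  | zero => simp
  | succ j ih =>
    rw [pow_succ', Module.End.mul_apply, Sop_apply, ih, pow_succ']
    ring

lemma Xop_pow_apply (n : ℕ) (w : Fin D → k) (i : Fin D) :
    ((Xop D (k := k)) ^ n) w i = if n ≤ (i : ℕ) then extz D w ((i : ℕ) - n) else 0 := by
  induction n generalizing w with
  | zero => simp [extz_lt w i.isLt]
  | succ n ih =>
    rw [pow_succ, Module.End.mul_apply, ih (Xop D w)]
    rcases Nat.lt_or_ge (i : ℕ) (n + 1) with h | h
    · rcases Nat.lt_or_ge (i : ℕ) n with h2 | h2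
      · rw [if_neg (by omega), if_neg (by omega)]
      · have h3 : (i : ℕ) = n := by omega
        rw [if_pos (by omega), if_neg (by omega), h3]
        have h4 : n - n = 0 := by omega
        rw [h4, extz_lt _ (by omega : 0 < D), Xop_apply]
        simp
    · rw [if_pos (by omega), if_pos h]
      have h5 : (i : ℕ) - n < D := by have := i.isLt; omega
      rw [extz_lt _ h5, Xop_apply]
      have h6 : (((⟨(i : ℕ) - n, h5⟩ : Fin D)) : ℕ) = (i : ℕ) - n := rfl
      rw [if_neg (by omega), h6, Nat.sub_sub]

lemma Yop_pow_apply (n : ℕ) (w : Fin D → k) (i : Fin D) :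
    ((Yop r ε c m D) ^ n) w i
      = (∏ l ∈ Finset.range n, (-(mu r ε c m ((i : ℕ) + l + 1)))) * extz D w ((i : ℕ) + n) := by
  induction n generalizing w with
  | zero => simp [extz_lt w i.isLt]
  | succ n ih =>
    rw [pow_succ, Module.End.mul_apply, ih (Yop r ε c m D w)]
    rcases Nat.lt_or_ge ((i : ℕ) + n) D with h | h
    · rw [extz_lt _ h, Yop_apply]
      have h2 : (((⟨(i : ℕ) + n, h⟩ : Fin D)) : ℕ) = (i : ℕ) + n := rfl
      rw [Finset.prod_range_succ]
      have h3 : (i : ℕ) + n + 1 = (i : ℕ) + (n + 1) := by omega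
      rw [h3]
      ring
    · rw [extz_le _ h, extz_le _ (by omega), mul_zero, mul_zero]

end Ops

-- ===== relations among the operators =====
section OpRel
variable {k : Type u} [Field k] {r : ℕ} {ε : k} {c : ℕ → k} {m : ZMod r} {D : ℕ}
variable (hr : 1 ≤ r) (hε : IsPrimitiveRoot ε r)

set_option linter.unusedSectionVars false

include hr hε

lemma relop_sr : (Sop r ε m D (k := k)) ^ r = 1 := by
  apply LinearMap.ext
  intro w
  funext i
  rw [Sop_pow_apply, EE_pow_r hr hε, one_mul, Module.End.one_apply]

lemma relop_sx : Sop r ε m D * Xop D = ε⁻¹ • (Xop D * Sop r ε m D) := by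
  apply LinearMap.ext
  intro w
  funext i
  rw [Module.End.mul_apply, LinearMap.smul_apply, Module.End.mul_apply, Pi.smul_apply,
    smul_eq_mul, Sop_apply, Xop_apply, Xop_apply]
  by_cases h0 : (i : ℕ) = 0
  · rw [if_pos h0, if_pos h0, mul_zero, mul_zero]
  · rw [if_neg h0, if_neg h0]
    have h1 : (i : ℕ) - 1 < D := by have := i.isLt; omega
    rw [extz_lt _ h1, extz_lt _ h1, Sop_apply]
    have h2 : (((⟨(i : ℕ) - 1, h1⟩ : Fin D)) : ℕ) = (i : ℕ) - 1 := rfl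
    rw [h2]
    have h3 := EE_sub_succ hr hε m ((i : ℕ) - 1)
    have h4 : (i : ℕ) - 1 + 1 = (i : ℕ) := by omega
    rw [h4] at h3
    rw [← h3]
    field_simp [eps_ne_zero hr hε]

lemma relop_sy : Sop r ε m D * Yop r ε c m D = ε • (Yop r ε c m D * Sop r ε m D) := by
  apply LinearMap.ext
  intro w
  funext i
  rw [Module.End.mul_apply, LinearMap.smul_apply, Module.End.mul_apply, Pi.smul_apply,
    smul_eq_mul, Sop_apply, Yop_apply, Yop_apply]
  rcases Nat.lt_or_ge ((i : ℕ) + 1) D with h | h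
  · rw [extz_lt _ h, extz_lt _ h, Sop_apply]
    have h2 : (((⟨(i : ℕ) + 1, h⟩ : Fin D)) : ℕ) = (i : ℕ) + 1 := rfl
    rw [h2]
    have h3 := EE_sub_succ hr hε m (i : ℕ)
    rw [← h3]
    ring
  · rw [extz_le _ h, extz_le _ h]
    ring

lemma relop_yx (hmuD : mu r ε c m D = 0) :
    Yop r ε c m D * Xop D - Xop D * Yop r ε c m D
      = algebraMap k (Module.End k (Fin D → k)) 0
          - ∑ j ∈ Finset.Icc 1 (r - 1), c j • (Sop r ε m D) ^ j := by
  apply LinearMap.ext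
  intro w
  funext i
  rw [map_zero, zero_sub, LinearMap.sub_apply, LinearMap.neg_apply, LinearMap.sum_apply]
  rw [Pi.sub_apply, Pi.neg_apply, Finset.sum_apply, Module.End.mul_apply, Module.End.mul_apply,
    Yop_apply, Xop_apply]
  have hA : -(mu r ε c m ((i : ℕ) + 1)) * extz D (Xop D w) ((i : ℕ) + 1)
      = -(mu r ε c m ((i : ℕ) + 1)) * w i := by
    rcases Nat.lt_or_ge ((i : ℕ) + 1) D with h | h
    · rw [extz_lt _ h, Xop_apply]
      have h2 : (((⟨(i : ℕ) + 1, h⟩ : Fin D)) : ℕ) = (i : ℕ) + 1 := rfl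
      rw [h2, if_neg (by omega)]
      have h3 : (i : ℕ) + 1 - 1 = (i : ℕ) := by omega
      rw [h3, extz_lt _ i.isLt]
    · have hD : (i : ℕ) + 1 = D := by have := i.isLt; omega
      rw [extz_le _ h, hD, hmuD]
      ring
  have hB : (if (i : ℕ) = 0 then 0 else extz D (Yop r ε c m D w) ((i : ℕ) - 1))
      = -(mu r ε c m (i : ℕ)) * w i := by
    by_cases h0 : (i : ℕ) = 0
    · rw [if_pos h0, h0, mu_zero]
      ring
    · rw [if_neg h0]
      have h1 : (i : ℕ) - 1 < D := by have := i.isLt; omega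
      rw [extz_lt _ h1, Yop_apply]
      have h2 : (((⟨(i : ℕ) - 1, h1⟩ : Fin D)) : ℕ) = (i : ℕ) - 1 := rfl
      rw [h2]
      have h3 : (i : ℕ) - 1 + 1 = (i : ℕ) := by omega
      rw [h3, extz_lt _ i.isLt]
  rw [hA, hB]
  have hC : ∑ j ∈ Finset.Icc 1 (r - 1), (c j • (Sop r ε m D) ^ j) w i
      = ff r ε c m (i : ℕ) * w i := by
    unfold ff
    rw [Finset.sum_mul]
    refine Finset.sum_congr rfl fun j _ => ?_
    rw [LinearMap.smul_apply, Pi.smul_apply, smul_eq_mul, Sop_pow_apply, EE_pow]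
    ring
  rw [hC, mu_succ]
  ring

end OpRel

-- ===== the algebra morphism =====
def phi {k : Type u} [Field k] (r : ℕ) (ε : k) (c : ℕ → k) (m : ZMod r) (D : ℕ)
    (hr : 1 ≤ r) (hε : IsPrimitiveRoot ε r) (hmuD : mu r ε c m D = 0) :
    Cherednik k r ε 0 c →ₐ[k] Module.End k (Fin D → k) :=
  RingQuot.liftAlgHom k ⟨FreeAlgebra.lift k ![Xop D, Yop r ε c m D, Sop r ε m D], by
    intro a b hab
    induction hab with
    | spow =>
      simp only [map_pow, map_one, FreeAlgebra.lift_ι_apply]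
      show (![Xop D, Yop r ε c m D, Sop r ε m D] 2) ^ r = 1
      exact relop_sr hr hε
    | sx =>
      simp only [map_mul, map_smul, FreeAlgebra.lift_ι_apply]
      show (![Xop D, Yop r ε c m D, Sop r ε m D] 2) * (![Xop D, Yop r ε c m D, Sop r ε m D] 0)
        = ε⁻¹ • ((![Xop D, Yop r ε c m D, Sop r ε m D] 0) * (![Xop D, Yop r ε c m D, Sop r ε m D] 2))
      exact relop_sx hr hε
    | sy =>
      simp only [map_mul, map_smul, FreeAlgebra.lift_ι_apply]
      show (![Xop D, Yop r ε c m D, Sop r ε m D] 2) * (![Xop D, Yop r ε c m D, Sop r ε m D] 1)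
        = ε • ((![Xop D, Yop r ε c m D, Sop r ε m D] 1) * (![Xop D, Yop r ε c m D, Sop r ε m D] 2))
      exact relop_sy hr hε
    | yx =>
      simp only [map_sub, map_mul, map_sum, map_smul, map_pow, FreeAlgebra.lift_ι_apply,
        AlgHom.commutes]
      show (![Xop D, Yop r ε c m D, Sop r ε m D] 1) * (![Xop D, Yop r ε c m D, Sop r ε m D] 0)
          - (![Xop D, Yop r ε c m D, Sop r ε m D] 0) * (![Xop D, Yop r ε c m D, Sop r ε m D] 1)
        = algebraMap k (Module.End k (Fin D → k)) 0
          - ∑ j ∈ Finset.Icc 1 (r - 1), c j • (![Xop D, Yop r ε c m D, Sop r ε m D] 2) ^ j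
      exact relop_yx hr hε hmuD⟩

section PhiApp
variable {k : Type u} [Field k] {r : ℕ} {ε : k} {c : ℕ → k} {m : ZMod r} {D : ℕ}
variable (hr : 1 ≤ r) (hε : IsPrimitiveRoot ε r) (hmuD : mu r ε c m D = 0)

lemma phi_X : phi r ε c m D hr hε hmuD (Hx k r ε 0 c) = Xop D := by
  rw [Hx, phi, RingQuot.liftAlgHom_mkAlgHom_apply, FreeAlgebra.lift_ι_apply]
  rfl

lemma phi_Y : phi r ε c m D hr hε hmuD (Hy k r ε 0 c) = Yop r ε c m D := by
  rw [Hy, phi, RingQuot.liftAlgHom_mkAlgHom_apply, FreeAlgebra.lift_ι_apply]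
  rfl

lemma phi_S : phi r ε c m D hr hε hmuD (Hs k r ε 0 c) = Sop r ε m D := by
  rw [Hs, phi, RingQuot.liftAlgHom_mkAlgHom_apply, FreeAlgebra.lift_ι_apply]
  rfl

end PhiApp

-- ===== transporting the standard module into an abstract module =====
section Transport
variable {k : Type u} [Field k] {r : ℕ} {ε : k} {c : ℕ → k} {m : ZMod r}
variable {M : Type u} [AddCommGroup M] [Module (Cherednik k r ε 0 c) M] [Module k M]
  [IsScalarTower k (Cherednik k r ε 0 c) M]

set_option linter.unusedSectionVars false

def L0 (r : ℕ) (ε : k) (c : ℕ → k)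
    [Module (Cherednik k r ε 0 c) M] [IsScalarTower k (Cherednik k r ε 0 c) M]
    (v : M) (D : ℕ) : (Fin D → k) →ₗ[k] M where
  toFun w := ∑ i ∈ Finset.range D, extz D w i • ((Hx k r ε 0 c) ^ i • v)
  map_add' a b := by
    simp only [extz_add, add_smul]
    rw [Finset.sum_add_distrib]
  map_smul' t a := by
    simp only [extz_smul, RingHom.id_apply, Finset.smul_sum, mul_smul]

variable (hr : 1 ≤ r) (hε : IsPrimitiveRoot ε r)
variable (v : M) {D : ℕ} (hD0 : 0 < D)

omit hD0 in
lemma L0_apply (w : Fin D → k) :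
    L0 r ε c v D w = ∑ i ∈ Finset.range D, extz D w i • ((Hx k r ε 0 c) ^ i • v) := rfl

variable (hyv : Hy k r ε 0 c • v = 0) (hsv : Hs k r ε 0 c • v = EE r ε m • v)

include hr hε hD0 hyv hsv

omit hyv hsv hr hε in
lemma L0_X (hxD : (Hx k r ε 0 c) ^ D • v = 0) (w : Fin D → k) :
    L0 r ε c v D (Xop D w) = Hx k r ε 0 c • L0 r ε c v D w := by
  obtain ⟨D', rfl⟩ : ∃ D', D = D' + 1 := ⟨D - 1, by omega⟩
  rw [L0_apply, L0_apply]
  rw [Finset.smul_sum, Finset.sum_range_succ', Finset.sum_range_succ]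
  have h0 : extz (D' + 1) (Xop (D' + 1) w) 0 = 0 := by
    rw [extz_lt _ (by omega : 0 < D' + 1), Xop_apply]
    simp
  rw [h0, zero_smul, add_zero]
  have hlast : extz (D' + 1) w D' • (Hx k r ε 0 c • ((Hx k r ε 0 c) ^ D' • v))
      = 0 := by
    rw [← mul_smul, ← pow_succ', hxD, smul_zero]
  have hstep : ∀ i, i ∈ Finset.range D' →
      extz (D' + 1) (Xop (D' + 1) w) (i + 1) • ((Hx k r ε 0 c) ^ (i + 1) • v)
        = extz (D' + 1) w i • (Hx k r ε 0 c • ((Hx k r ε 0 c) ^ i • v)) := by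
    intro i hi
    rw [Finset.mem_range] at hi
    rw [extz_lt _ (by omega : i + 1 < D' + 1), Xop_apply]
    have h2 : (((⟨i + 1, by omega⟩ : Fin (D' + 1))) : ℕ) = i + 1 := rfl
    rw [h2, if_neg (by omega)]
    have h3 : i + 1 - 1 = i := rfl
    rw [h3, ← mul_smul, ← pow_succ']
  rw [Finset.sum_congr rfl hstep]
  have hstep2 : ∀ i ∈ Finset.range D',
      Hx k r ε 0 c • (extz (D' + 1) w i • ((Hx k r ε 0 c) ^ i • v))
        = extz (D' + 1) w i • (Hx k r ε 0 c • ((Hx k r ε 0 c) ^ i • v)) :=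
    fun i _ => csmul _ _ _
  rw [Finset.sum_congr rfl hstep2, csmul, hlast, add_zero]

omit hD0 in
lemma L0_S (w : Fin D → k) :
    L0 r ε c v D (Sop r ε m D w) = Hs k r ε 0 c • L0 r ε c v D w := by
  rw [L0_apply, L0_apply]
  rw [Finset.smul_sum]
  refine Finset.sum_congr rfl fun i hi => ?_
  rw [Finset.mem_range] at hi
  rw [csmul, actS hr hε v hsv i, smul_smul, extz_lt _ hi, extz_lt _ hi, Sop_apply]
  have h2 : (((⟨i, hi⟩ : Fin D)) : ℕ) = i := rfl
  rw [h2, mul_comm]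

lemma L0_Y (w : Fin D → k) :
    L0 r ε c v D (Yop r ε c m D w) = Hy k r ε 0 c • L0 r ε c v D w := by
  obtain ⟨D', rfl⟩ : ∃ D', D = D' + 1 := ⟨D - 1, by omega⟩
  rw [L0_apply, L0_apply]
  rw [Finset.smul_sum, Finset.sum_range_succ, Finset.sum_range_succ']
  have hlast : extz (D' + 1) (Yop r ε c m (D' + 1) w) D'
      • ((Hx k r ε 0 c) ^ D' • v) = 0 := by
    rw [extz_lt _ (by omega : D' < D' + 1), Yop_apply]
    have h2 : (((⟨D', by omega⟩ : Fin (D' + 1))) : ℕ) = D' := rfl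
    rw [h2, extz_le _ (by omega), mul_zero, zero_smul]
  rw [hlast, add_zero]
  have h0 : Hy k r ε 0 c • (extz (D' + 1) w 0 • ((Hx k r ε 0 c) ^ 0 • v)) = 0 := by
    rw [csmul, pow_zero, one_smul, hyv, smul_zero]
  rw [h0, add_zero]
  refine Finset.sum_congr rfl fun i hi => ?_
  rw [Finset.mem_range] at hi
  rw [extz_lt _ (by omega : i < D' + 1), Yop_apply]
  have h2 : (((⟨i, by omega⟩ : Fin (D' + 1))) : ℕ) = i := rfl
  rw [h2, csmul, actY hr hε v hyv hsv (i + 1)]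
  have h3 : i + 1 - 1 = i := rfl
  rw [h3, smul_smul, mul_comm]

end Transport


/-- Proposition 2.8 (existence, uniqueness, dimension): for each `m ∈ ℤ/rℤ` there is a unique
simple `H'`-module `W` with `x^r = y^r = 0` and `s v = ε^m v` whenever `y v = 0`; its
dimension `D` satisfies `1 ≤ D ≤ r` and is the least positive integer with
`0 = ∑_{i=0}^{D-1} ∑_{j=1}^{r-1} c_j ε^{(m-i)j}`. -/
theorem stmt7 (k : Type u) [Field k] (p : ℕ) (hp : p.Prime) [CharP k p]
    (r : ℕ) (hr : 1 ≤ r) (hpr : ¬ p ∣ r) (ε : k) (hε : IsPrimitiveRoot ε r)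
    (c : ℕ → k) (m : ZMod r) :
    ∃ (W : Type u) (_ : AddCommGroup W) (_ : Module (Cherednik k r ε 0 c) W)
      (_ : Module k W) (_ : IsScalarTower k (Cherednik k r ε 0 c) W),
      IsSimpleModule (Cherednik k r ε 0 c) W ∧
      (∀ v : W, (Hx k r ε 0 c) ^ r • v = 0) ∧
      (∀ v : W, (Hy k r ε 0 c) ^ r • v = 0) ∧
      (∀ v : W, Hy k r ε 0 c • v = 0 → Hs k r ε 0 c • v = ε ^ m.val • v) ∧
      (∀ (W' : Type u) (_ : AddCommGroup W') (_ : Module (Cherednik k r ε 0 c) W')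
        (_ : Module k W') (_ : IsScalarTower k (Cherednik k r ε 0 c) W'),
        IsSimpleModule (Cherednik k r ε 0 c) W' →
        (∀ v : W', (Hx k r ε 0 c) ^ r • v = 0) →
        (∀ v : W', (Hy k r ε 0 c) ^ r • v = 0) →
        (∀ v : W', Hy k r ε 0 c • v = 0 → Hs k r ε 0 c • v = ε ^ m.val • v) →
        Nonempty (W ≃ₗ[Cherednik k r ε 0 c] W')) ∧
      1 ≤ Module.finrank k W ∧ Module.finrank k W ≤ r ∧
      IsLeast {D : ℕ | 0 < D ∧ (0 : k) =
          ∑ i ∈ Finset.range D, ∑ j ∈ Finset.Icc 1 (r - 1),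
            c j * ε ^ ((m - (i : ZMod r)).val * j)}
        (Module.finrank k W) := by
  classical
  haveI : NeZero r := ⟨by omega⟩
  have hex : ∃ D, 0 < D ∧ mu r ε c m D = 0 := ⟨r, by omega, mu_r hr hε c m⟩
  obtain ⟨hD0, hmuD⟩ := Nat.find_spec hex
  set D := Nat.find hex with hDdef
  have hDr : D ≤ r := Nat.find_min' hex ⟨by omega, mu_r hr hε c m⟩
  have hmin : ∀ i, 0 < i → i < D → mu r ε c m i ≠ 0 := fun i h1 h2 h3 =>
    Nat.find_min hex h2 ⟨h1, h3⟩
  set φ := phi r ε c m D hr hε hmuD with hφ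
  letI instM : Module (Cherednik k r ε 0 c) (Fin D → k) := Module.compHom _ φ.toRingHom
  have smul_def : ∀ (a : Cherednik k r ε 0 c) (w : Fin D → k), a • w = φ a w := fun a w => rfl
  haveI instT : IsScalarTower k (Cherednik k r ε 0 c) (Fin D → k) := by
    constructor
    intro t a w
    rw [smul_def, smul_def, map_smul]
    rfl
  have hXw : ∀ w : Fin D → k, Hx k r ε 0 c • w = Xop D w := fun w => by
    rw [smul_def, hφ, phi_X]
  have hYw : ∀ w : Fin D → k, Hy k r ε 0 c • w = Yop r ε c m D w := fun w => by
    rw [smul_def, hφ, phi_Y]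
  have hSw : ∀ w : Fin D → k, Hs k r ε 0 c • w = Sop r ε m D w := fun w => by
    rw [smul_def, hφ, phi_S]
  have hXpow : ∀ (n : ℕ) (w : Fin D → k), (Hx k r ε 0 c) ^ n • w = ((Xop D) ^ n) w :=
    fun n w => by rw [smul_def, map_pow, hφ, phi_X]
  have hYpow : ∀ (n : ℕ) (w : Fin D → k), (Hy k r ε 0 c) ^ n • w = ((Yop r ε c m D) ^ n) w :=
    fun n w => by rw [smul_def, map_pow, hφ, phi_Y]
  -- the four module-theoretic properties of W
  have hxrW : ∀ w : Fin D → k, (Hx k r ε 0 c) ^ r • w = 0 := by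
    intro w
    rw [hXpow]
    funext i
    rw [Xop_pow_apply, if_neg (by have := i.isLt; omega)]
    rfl
  have hyrW : ∀ w : Fin D → k, (Hy k r ε 0 c) ^ r • w = 0 := by
    intro w
    rw [hYpow]
    funext i
    rw [Yop_pow_apply, extz_le _ (by have := i.isLt; omega), mul_zero]
    rfl
  have hcondW : ∀ w : Fin D → k, Hy k r ε 0 c • w = 0 → Hs k r ε 0 c • w = ε ^ m.val • w := by
    intro w hy0
    rw [hYw] at hy0
    have hz : ∀ j : Fin D, (j : ℕ) ≠ 0 → w j = 0 := by
      intro j hj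
      have h1 : (j : ℕ) - 1 < D := by have := j.isLt; omega
      have h2 := congrFun hy0 ⟨(j : ℕ) - 1, h1⟩
      rw [Yop_apply] at h2
      have h3 : ((⟨(j : ℕ) - 1, h1⟩ : Fin D) : ℕ) = (j : ℕ) - 1 := rfl
      rw [h3] at h2
      have h4 : (j : ℕ) - 1 + 1 = (j : ℕ) := by omega
      rw [h4, extz_lt _ j.isLt, Fin.eta] at h2
      have h5 : mu r ε c m (j : ℕ) ≠ 0 := hmin _ (by omega) j.isLt
      simp only [Pi.zero_apply] at h2
      rcases mul_eq_zero.mp h2 with h7 | h7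
      · exact absurd (neg_eq_zero.mp h7) h5
      · exact h7
    rw [hSw]
    funext j
    rw [Sop_apply, Pi.smul_apply, smul_eq_mul]
    by_cases hj : (j : ℕ) = 0
    · rw [hj, Nat.cast_zero, sub_zero]
      rfl
    · rw [hz j hj, mul_zero, mul_zero]
  -- simplicity
  haveI hsimple : IsSimpleModule (Cherednik k r ε 0 c) (Fin D → k) := by
    haveI : Nontrivial (Submodule (Cherednik k r ε 0 c) (Fin D → k)) := by
      refine ⟨⊥, ⊤, fun hbot => ?_⟩
      have he : (Pi.single (⟨0, hD0⟩ : Fin D) (1 : k)) ∈ (⊤ : Submodule (Cherednik k r ε 0 c) (Fin D → k)) :=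
        trivial
      rw [← hbot, Submodule.mem_bot] at he
      have := congrFun he ⟨0, hD0⟩
      simp at this
    refine { eq_bot_or_eq_top := fun N => ?_ }
    by_cases hN : N = ⊥
    · exact Or.inl hN
    right
    obtain ⟨w, hwN, hw0⟩ := (Submodule.ne_bot_iff N).mp hN
    have hTne : (Finset.univ.filter (fun i : Fin D => w i ≠ 0)).Nonempty := by
      obtain ⟨i, hi⟩ := Function.ne_iff.mp hw0
      exact ⟨i, Finset.mem_filter.2 ⟨Finset.mem_univ _, hi⟩⟩
    set i0 := (Finset.univ.filter (fun i : Fin D => w i ≠ 0)).max' hTne with hi0def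
    have hwi0 : w i0 ≠ 0 :=
      (Finset.mem_filter.1 ((Finset.univ.filter (fun i : Fin D => w i ≠ 0)).max'_mem hTne)).2
    have hmax : ∀ j : Fin D, (i0 : ℕ) < (j : ℕ) → w j = 0 := by
      intro j hj
      by_contra hj0
      have h1 := Finset.le_max' (Finset.univ.filter (fun i : Fin D => w i ≠ 0)) j
        (Finset.mem_filter.2 ⟨Finset.mem_univ _, hj0⟩)
      rw [← hi0def] at h1
      rw [Fin.le_def] at h1
      omega
    set κ := (∏ l ∈ Finset.range (i0 : ℕ), (-(mu r ε c m (l + 1)))) * w i0 with hκdef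
    have hκ0 : κ ≠ 0 := by
      apply mul_ne_zero _ hwi0
      rw [Finset.prod_ne_zero_iff]
      intro l hl
      rw [Finset.mem_range] at hl
      have hlD : l + 1 < D := by have := i0.isLt; omega
      exact neg_ne_zero.2 (hmin (l + 1) (by omega) hlD)
    have hYi0 : (Hy k r ε 0 c) ^ (i0 : ℕ) • w
        = κ • (Pi.single (⟨0, hD0⟩ : Fin D) (1 : k) : Fin D → k) := by
      rw [hYpow]
      funext j
      rw [Yop_pow_apply, Pi.smul_apply, Pi.single_apply, smul_eq_mul]
      by_cases hj : j = ⟨0, hD0⟩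
      · rw [if_pos hj, hj]
        have h0 : ((⟨0, hD0⟩ : Fin D) : ℕ) = 0 := rfl
        rw [h0]
        simp only [Nat.zero_add, zero_add]
        rw [extz_lt _ i0.isLt, Fin.eta, mul_one, hκdef]
      · rw [if_neg hj]
        have hj1 : (j : ℕ) ≠ 0 := by
          intro h
          exact hj (Fin.ext h)
        rcases Nat.lt_or_ge ((j : ℕ) + (i0 : ℕ)) D with h | h
        · rw [extz_lt _ h]
          have hc : ((⟨(j : ℕ) + (i0 : ℕ), h⟩ : Fin D) : ℕ) = (j : ℕ) + (i0 : ℕ) := rfl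
          have h2 : w ⟨(j : ℕ) + (i0 : ℕ), h⟩ = 0 := hmax _ (by rw [hc]; omega)
          rw [h2, mul_zero, mul_zero]
        · rw [extz_le _ h, mul_zero, mul_zero]
    have he0 : (Pi.single (⟨0, hD0⟩ : Fin D) (1 : k)) ∈ N := by
      have h1 : (Hy k r ε 0 c) ^ (i0 : ℕ) • w ∈ N := N.smul_mem _ hwN
      rw [hYi0] at h1
      have h2 := N.smul_mem (algebraMap k (Cherednik k r ε 0 c) κ⁻¹) h1
      rw [algebraMap_smul, inv_smul_smul₀ hκ0] at h2
      exact h2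
    have hsingle : ∀ n (hn : n < D), Pi.single (⟨n, hn⟩ : Fin D) (1 : k) ∈ N := by
      intro n
      induction n with
      | zero => intro hn; exact he0
      | succ n ih =>
        intro hn
        have hmem : Hx k r ε 0 c • (Pi.single (⟨n, by omega⟩ : Fin D) (1 : k) : Fin D → k) ∈ N :=
          N.smul_mem _ (ih (by omega))
        rw [hXw] at hmem
        have heq : Xop D (Pi.single (⟨n, by omega⟩ : Fin D) (1 : k))
            = Pi.single (⟨n + 1, hn⟩ : Fin D) (1 : k) := by
          funext j
          rw [Xop_apply, Pi.single_apply]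
          by_cases hj0 : (j : ℕ) = 0
          · rw [if_pos hj0, if_neg (by rw [Fin.ext_iff]; simp only []; omega)]
          · rw [if_neg hj0]
            have hle : (j : ℕ) - 1 < D := by have := j.isLt; omega
            rw [extz_lt _ hle, Pi.single_apply]
            by_cases hj : (j : ℕ) = n + 1
            · rw [if_pos (by rw [Fin.ext_iff]; show (j:ℕ) - 1 = n; omega),
                if_pos (by rw [Fin.ext_iff]; exact hj)]
            · rw [if_neg (by rw [Fin.ext_iff]; show ¬ ((j:ℕ) - 1 = n); omega),
                if_neg (by rw [Fin.ext_iff]; exact hj)]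
        rw [heq] at hmem
        exact hmem
    rw [eq_top_iff]
    intro w' _
    rw [← Finset.univ_sum_single w']
    apply Submodule.sum_mem
    intro j _
    have hsm : Pi.single j (w' j)
        = (algebraMap k (Cherednik k r ε 0 c) (w' j)) • (Pi.single j (1 : k) : Fin D → k) := by
      rw [algebraMap_smul]
      funext t
      rw [Pi.smul_apply, Pi.single_apply, Pi.single_apply, smul_eq_mul]
      split <;> simp
    rw [hsm]
    apply N.smul_mem
    have := hsingle (j : ℕ) j.isLt
    rwa [Fin.eta] at this
  -- final assembly
  refine ⟨Fin D → k, inferInstance, instM, inferInstance, instT, hsimple, hxrW, hyrW, hcondW,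
    ?_, ?_, ?_, ?_⟩
  · -- uniqueness
    intro W' iAG iM ik iT hsimple' hxr' hyr' hcond'
    haveI := iT
    haveI := hsimple'
    haveI : Nontrivial W' := IsSimpleModule.nontrivial (Cherednik k r ε 0 c) W'
    obtain ⟨u, hu⟩ := exists_ne (0 : W')
    obtain ⟨v, hv0, hyv⟩ := exists_ker hyr' u hu
    have hsv : Hs k r ε 0 c • v = EE r ε m • v := hcond' v hyv
    have hxD : (Hx k r ε 0 c) ^ D • v = 0 :=
      xDzero hr hε v hyv hsv D hD0 hDr hmuD hxr' (fun w hw => hcond' w hw)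
    have hcomm : ∀ (a : Cherednik k r ε 0 c) (w : Fin D → k),
        L0 r ε c v D (a • w) = a • L0 r ε c v D w := by
      intro a
      obtain ⟨b, rfl⟩ := RingQuot.mkAlgHom_surjective k (CherednikRel k r ε 0 c) a
      induction b using FreeAlgebra.induction with
      | grade0 t =>
        intro w
        rw [AlgHom.commutes, algebraMap_smul, algebraMap_smul, map_smul]
      | grade1 x =>
        fin_cases x
        · intro w
          show L0 r ε c v D (Hx k r ε 0 c • w) = Hx k r ε 0 c • L0 r ε c v D w
          rw [hXw]
          exact L0_X v hD0 hxD w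
        · intro w
          show L0 r ε c v D (Hy k r ε 0 c • w) = Hy k r ε 0 c • L0 r ε c v D w
          rw [hYw]
          exact L0_Y hr hε v hD0 hyv hsv w
        · intro w
          show L0 r ε c v D (Hs k r ε 0 c • w) = Hs k r ε 0 c • L0 r ε c v D w
          rw [hSw]
          exact L0_S hr hε v hyv hsv w
      | mul a b ha hb =>
        intro w
        rw [map_mul, mul_smul, mul_smul, ha, hb]
      | add a b ha hb =>
        intro w
        rw [map_add, add_smul, add_smul, (L0 r ε c v D).map_add, ha, hb]
    let L : (Fin D → k) →ₗ[Cherednik k r ε 0 c] W' :=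
      { toFun := L0 r ε c v D
        map_add' := map_add _
        map_smul' := fun a w => hcomm a w }
    have hLe0 : L (Pi.single (⟨0, hD0⟩ : Fin D) (1 : k)) = v := by
      show L0 r ε c v D (Pi.single (⟨0, hD0⟩ : Fin D) (1 : k)) = v
      rw [L0_apply]
      rw [Finset.sum_eq_single_of_mem 0 (Finset.mem_range.2 hD0)]
      · rw [extz_lt _ hD0, Pi.single_apply, if_pos rfl, pow_zero, one_smul, one_smul]
      · intro b hb hb0
        rcases Nat.lt_or_ge b D with h | h
        · rw [extz_lt _ h, Pi.single_apply,
            if_neg (by rw [Fin.ext_iff]; show ¬ (b = 0); omega), zero_smul]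
        · rw [extz_le _ h, zero_smul]
    have hLne : L ≠ 0 := by
      intro h
      apply hv0
      rw [← hLe0, h]
      rfl
    have hinj := (LinearMap.injective_or_eq_zero L).resolve_right hLne
    have hsurj := (LinearMap.surjective_or_eq_zero L).resolve_right hLne
    exact ⟨LinearEquiv.ofBijective L ⟨hinj, hsurj⟩⟩
  · rw [Module.finrank_fin_fun]; omega
  · rw [Module.finrank_fin_fun]; exact hDr
  · rw [Module.finrank_fin_fun]
    constructor
    · exact ⟨hD0, hmuD.symm⟩
    · intro b hb
      exact Nat.find_min' hex ⟨hb.1, hb.2.symm⟩
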